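/- Let G be the hypergraph obtained from a single isolated vertex by first adding m − 1 isolated vertices (so m vertices total) and then adding one k-dominating set. Then the eigenvalues of L_G are: 0 with multiplicity 1, 1 with multiplicity m − 1, (m + k)/k with multiplicity 1, and (k+1)m/k with multiplicity k − 1. -/

import Mathlib

/-!
Every edge of the hypergraph is `{u} ∪ S` with `|S| = k`, so in block form (old vertices, then
`S`) the Laplacian is `[[I, -J/k], [-J/k, ((k+1)m/k) I - (m/k) J]]`. Its eigenvectors are the
all-ones vector (eigenvalue `0`), differences `e_u - e_u'` of old vertices (`1`), the vector that
is `k` on old vertices and `-m` on `S` (`(m+k)/k`), and differences of vertices of `S`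
(`(k+1)m/k`). They form a basis with an explicit inverse, so the Laplacian is similar to the
diagonal matrix of these eigenvalues.
-/

open Finset

/-- The hypergraph Laplacian as an operator on real-valued vertex functions:
`(L_G f)(v) = ∑_{e ∋ v} (1/(|e|-1)) ∑_{u ∈ e} (f v - f u)`. -/
noncomputable def lapOp {V : Type} [Fintype V] [DecidableEq V] (E : Finset (Finset V)) (f : V → ℝ) : V → ℝ :=
  fun v => ∑ e ∈ E.filter (fun e => v ∈ e), (1 / ((e.card : ℝ) - 1)) * ∑ u ∈ e, (f v - f u)

/-- The matrix of the hypergraph Laplacian. -/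
noncomputable def lapMatrix {V : Type} [Fintype V] [DecidableEq V] (E : Finset (Finset V)) : Matrix V V ℝ :=
  Matrix.of fun v w => ∑ e ∈ E.filter (fun e => v ∈ e),
    (1 / ((e.card : ℝ) - 1)) * ((if w = v then (e.card : ℝ) else 0) - (if w ∈ e then 1 else 0))

/-- Edge set obtained from `E` by adding a `k`-dominating set `S = Fin k` of fresh vertices:
the new edges are `S ∪ {u}` for every old vertex `u`. -/
def domEdges {V : Type} [Fintype V] [DecidableEq V] (E : Finset (Finset V)) (k : ℕ) :
    Finset (Finset (V ⊕ Fin k)) :=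
  E.image (Finset.image Sum.inl) ∪
    (Finset.univ : Finset V).image
      (fun u => insert (Sum.inl u) ((Finset.univ : Finset (Fin k)).image Sum.inr))

open Matrix Polynomial

theorem Matrix.charpoly_eq_of_mul_eq_mul_diagonal {n R : Type*} [Fintype n] [DecidableEq n]
    [CommRing R] {A P Q : Matrix n n R} {d : n → R} (hQP : Q * P = 1)
    (hAP : A * P = P * diagonal d) : A.charpoly = (diagonal d).charpoly := by
  calc A.charpoly = (P * diagonal d * Q).charpoly := by
        rw [← hAP, Matrix.mul_assoc, mul_eq_one_comm.mp hQP, Matrix.mul_one]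
    _ = (diagonal d).charpoly := by
        rw [Matrix.mul_assoc, charpoly_mul_comm, Matrix.mul_assoc, hQP, Matrix.mul_one]

theorem Matrix.roots_charpoly_diagonal {n R : Type*} [Fintype n] [DecidableEq n]
    [CommRing R] [IsDomain R] (d : n → R) :
    (diagonal d).charpoly.roots = univ.val.map d := by
  rw [charpoly_diagonal, prod_eq_multiset_prod,
    ← roots_multiset_prod_X_sub_C (univ.val.map d), Multiset.map_map]
  rfl

theorem Fin.univ_val_map_ite_zero {α : Type*} {n : ℕ} [NeZero n] (a b : α) :
    univ.val.map (fun i : Fin n => if i = 0 then a else b) =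
      a ::ₘ Multiset.replicate (n - 1) b := by
  obtain ⟨n, rfl⟩ := Nat.exists_eq_succ_of_ne_zero (NeZero.ne n)
  simp [Fin.univ_val_map, List.ofFn_succ, Fin.succ_ne_zero, ← Multiset.cons_coe,
    Multiset.coe_replicate]

theorem Fintype.univ_val_map_sumElim {α β γ : Type*} [Fintype α] [Fintype β] (f : α → γ)
    (g : β → γ) :
    univ.val.map (Sum.elim f g) = univ.val.map f + univ.val.map g :=
  Multiset.map_disjSum _

section StarEdge

variable {V : Type} [DecidableEq V] (k : ℕ)

def starEdge (u : V) : Finset (V ⊕ Fin k) :=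
  insert (Sum.inl u) (univ.image Sum.inr)

variable {k}

@[simp]
theorem inl_mem_starEdge {a u : V} : Sum.inl a ∈ starEdge k u ↔ a = u := by
  simp [starEdge]

@[simp]
theorem inr_mem_starEdge (b : Fin k) (u : V) : Sum.inr b ∈ starEdge k u := by
  simp [starEdge]

theorem card_starEdge (u : V) : (starEdge k u).card = k + 1 := by
  rw [starEdge, card_insert_of_notMem (by simp),
    card_image_of_injective _ Sum.inr_injective, card_univ, Fintype.card_fin]

theorem starEdge_injective : Function.Injective (starEdge (V := V) k) := by
  intro u u' h
  rw [← inl_mem_starEdge (k := k), ← h]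
  exact mem_insert_self _ _

variable [Fintype V]

theorem domEdges_empty : domEdges (∅ : Finset (Finset V)) k = univ.image (starEdge k) := by
  rw [domEdges, image_empty, empty_union]
  rfl

theorem lapMatrix_domEdges_empty_apply (v w : V ⊕ Fin k) :
    lapMatrix (domEdges (∅ : Finset (Finset V)) k) v w =
      ∑ u, if v ∈ starEdge k u then
        ((if w = v then (k : ℝ) + 1 else 0) - if w ∈ starEdge k u then 1 else 0) / k
      else 0 := by
  simp only [lapMatrix, of_apply, domEdges_empty, sum_filter,
    sum_image fun _ _ _ _ h => starEdge_injective h, card_starEdge]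
  push_cast
  simp only [add_sub_cancel_right, one_div_mul_eq_div]

end StarEdge

noncomputable def domLap (m k : ℕ) : Matrix (Fin m ⊕ Fin k) (Fin m ⊕ Fin k) ℝ :=
  fromBlocks 1 (of fun _ _ => -1 / k) (of fun _ _ => -1 / k)
    (of fun i j => (if i = j then ((k : ℝ) + 1) * m / k else 0) - m / k)

theorem lapMatrix_domEdges_empty (m k : ℕ) (hk : k ≠ 0) :
    lapMatrix (domEdges (∅ : Finset (Finset (Fin m))) k) = domLap m k := by
  ext (a | b) (c | d) <;> rw [lapMatrix_domEdges_empty_apply]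
  · rcases eq_or_ne c a with rfl | h
    · simp [domLap, hk]
    · simp [domLap, h, h.symm]
  · simp [domLap]
  · simp [domLap, ← sum_div]
  · rcases eq_or_ne d b with rfl | h
    · simp [domLap]
      field_simp
      ring
    · simp [domLap, h, h.symm]
      ring

section Eigenbasis

variable (m k : ℕ) [NeZero m] [NeZero k]

-- Columns: the eigenvectors listed above, with `e_u - e_u'` taken for `u' = 0` in each block.
noncomputable def domEigvecs : Matrix (Fin m ⊕ Fin k) (Fin m ⊕ Fin k) ℝ :=
  fromBlocks (of fun i j => if j = 0 then 1 else (if i = j then 1 else 0) - if i = 0 then 1 else 0)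
    (of fun _ j => if j = 0 then (k : ℝ) else 0) (of fun _ j => if j = 0 then 1 else 0)
    (of fun i j => if j = 0 then -(m : ℝ) else (if i = j then 1 else 0) - if i = 0 then 1 else 0)

noncomputable def domEigvecsInv : Matrix (Fin m ⊕ Fin k) (Fin m ⊕ Fin k) ℝ :=
  fromBlocks (of fun i j => if i = 0 then 1 / (m + k) else (if i = j then 1 else 0) - 1 / m)
    (of fun i _ => if i = 0 then 1 / (m + k) else 0)
    (of fun i _ => if i = 0 then 1 / (m * (m + k)) else 0)
    (of fun i j => if i = 0 then -1 / (k * (m + k)) else (if i = j then 1 else 0) - 1 / k)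

noncomputable def domEigvals : Fin m ⊕ Fin k → ℝ :=
  Sum.elim (fun i => if i = 0 then 0 else 1)
    (fun j => if j = 0 then (m + k) / k else (k + 1) * m / k)

theorem domEigvecsInv_mul_domEigvecs : domEigvecsInv m k * domEigvecs m k = 1 := by
  have hm : (m : ℝ) ≠ 0 := Nat.cast_ne_zero.mpr (NeZero.ne m)
  have hk : (k : ℝ) ≠ 0 := Nat.cast_ne_zero.mpr (NeZero.ne k)
  have hmk : (m : ℝ) + k ≠ 0 := by positivity
  ext v w
  rw [Matrix.mul_apply, Fintype.sum_sum_type]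
  rcases v with i | i <;> rcases w with j | j <;>
    rcases eq_or_ne i 0 with rfl | hi <;> rcases eq_or_ne j 0 with rfl | hj <;>
    simp [domEigvecsInv, domEigvecs, Matrix.one_apply, sum_sub_distrib, mul_sub, sub_mul,
      mul_ite, eq_comm, *] <;>
    field_simp <;> ring

theorem domLap_mul_domEigvecs :
    domLap m k * domEigvecs m k = domEigvecs m k * diagonal (domEigvals m k) := by
  have hm : (m : ℝ) ≠ 0 := Nat.cast_ne_zero.mpr (NeZero.ne m)
  have hk : (k : ℝ) ≠ 0 := Nat.cast_ne_zero.mpr (NeZero.ne k)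
  ext v w
  rw [Matrix.mul_apply, Fintype.sum_sum_type, Matrix.mul_diagonal]
  rcases v with i | i <;> rcases w with j | j <;>
    rcases eq_or_ne i 0 with rfl | hi <;> rcases eq_or_ne j 0 with rfl | hj <;>
    simp [domLap, domEigvecs, domEigvals, Matrix.one_apply, sum_sub_distrib, mul_sub, sub_mul,
      mul_ite, eq_comm, *] <;>
    field_simp <;> ring

end Eigenbasis

/-- Spectrum of the hypergraph obtained from `m` isolated vertices by one `k`-domination:
`0`, `1` (multiplicity `m-1`), `(m+k)/k`, and `(k+1)m/k` (multiplicity `k-1`). -/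
theorem stmt_5 (m k : ℕ) (hm : 1 ≤ m) (hk : 1 ≤ k) :
    (lapMatrix (domEdges (∅ : Finset (Finset (Fin m))) k)).charpoly.roots =
      ((0 : ℝ) ::ₘ Multiset.replicate (m - 1) 1) + {((m : ℝ) + k) / k} +
        Multiset.replicate (k - 1) (((k : ℝ) + 1) * m / k) := by
  have : NeZero m := ⟨by omega⟩
  have : NeZero k := ⟨by omega⟩
  rw [lapMatrix_domEdges_empty m k (NeZero.ne k),
    charpoly_eq_of_mul_eq_mul_diagonal (domEigvecsInv_mul_domEigvecs m k)
      (domLap_mul_domEigvecs m k),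
    roots_charpoly_diagonal, domEigvals, Fintype.univ_val_map_sumElim,
    Fin.univ_val_map_ite_zero, Fin.univ_val_map_ite_zero, add_assoc, Multiset.singleton_add]
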